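/- arXiv:math/0307047 — 2 statements merged into one kernel-verified Lean document; each statement's English description precedes it below -/
import Mathlib

section
/- Let A be a unital ring, S a countably infinite set, B = M_S(A) the ring of column-finite matrices, endowed with the finite topology. The functors F(M) = A^{⊕S} ⊗_A M and G(N) = Hom_B(A^{⊕S}, N) are mutually quasi-inverse and give an equivalence between the category of finitely generated left A-modules and the category of smooth finitely generated left B-modules (a B-module is smooth if the annihilator of each element is open). -/
/-!
Fix `s₀ ∈ S` and the idempotent `e = single s₀ s₀ 1`. The functor `Hom_B(A^{⊕S}, -)` is modelled
by the corner `N ↦ e N`, an `A`-module through `a ↦ single s₀ s₀ a`, and `A^{⊕S} ⊗_A -` by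
`M ↦ S →₀ M`, on which column-finite matrices act by matrix-vector multiplication.
Every `M` is recovered as the corner `single s₀ M` of `S →₀ M`. In the other direction,
`x ↦ ∑ₜ single t s₀ 1 • xₜ` maps `S →₀ e N` to `N`; applying `single s₀ t 1` shows that it is
injective, and smoothness is exactly what makes it surjective: if `I_E` kills `n`, then it kills
`1 - ∑_{t ∈ E} single t t 1` in particular, so `n = ∑_{t ∈ E} single t s₀ 1 • single s₀ t 1 • n`.
Finite generation passes through both isomorphisms: generators of `M` in coordinate `s₀` generate
`S →₀ M`, and the coordinates of finitely many generators of `S →₀ M` generate `M`.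
-/

universe u v

abbrev ColumnFiniteMatrix (A S : Type*) [Ring A] := Module.End Aᵐᵒᵖ (S →₀ A)

namespace ColumnFiniteMatrix

open MulOpposite

noncomputable section

variable {A : Type u} {S : Type v} [Ring A] {M M' : Type*} [AddCommGroup M] [Module A M]
  [AddCommGroup M'] [Module A M']
  {N N' : Type*} [AddCommGroup N] [Module (ColumnFiniteMatrix A S) N]
  [AddCommGroup N'] [Module (ColumnFiniteMatrix A S) N']

def single (s t : S) (a : A) : ColumnFiniteMatrix A S :=
  Finsupp.lsingle s ∘ₗ DistribSMul.toLinearMap Aᵐᵒᵖ A a ∘ₗ Finsupp.lapply t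

@[simp] lemma single_apply (s t : S) (a : A) (v : S →₀ A) :
    single s t a v = Finsupp.single s (a * v t) := rfl

lemma single_add (s t : S) (a b : A) : single s t (a + b) = single s t a + single s t b :=
  LinearMap.ext fun v => by simp [add_mul]

@[simp] lemma single_zero (s t : S) : single s t (0 : A) = 0 :=
  LinearMap.ext fun v => by simp

lemma single_mul_single_same (s t u : S) (a b : A) :
    single s t a * single t u b = single s u (a * b) :=
  LinearMap.ext fun v => by simp [mul_assoc]

lemma single_mul_single_of_ne {t t' : S} (h : t ≠ t') (s u : S) (a b : A) :
    single s t a * single t' u b = 0 :=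
  LinearMap.ext fun v => by simp [h]

lemma op_smul_single_one (t : S) (a : A) :
    op a • (Finsupp.single t 1 : S →₀ A) = Finsupp.single t a := by
  simp [Finsupp.smul_single]

lemma mul_single_one (f : ColumnFiniteMatrix A S) (t u : S) :
    f * single t u 1 = (f (Finsupp.single t 1)).sum fun s a => single s u a := by
  refine LinearMap.ext fun v => ?_
  rw [Module.End.mul_apply, single_apply, one_mul, ← op_smul_single_one, map_smul,
    LinearMap.finsupp_sum_apply]
  conv_lhs => rw [← Finsupp.sum_single (f _), Finsupp.smul_sum]
  simp [Finsupp.smul_single]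

-- The basic open left ideal `I_E` of the finite topology.
variable (A) in
def vanishingOn (E : Finset S) : Set (ColumnFiniteMatrix A S) :=
  {f | ∀ v : S →₀ A, (v.support : Set S) ⊆ E → f v = 0}

lemma sum_single_apply_of_support_subset (E : Finset S) {v : S →₀ A}
    (hv : (v.support : Set S) ⊆ E) : (∑ t ∈ E, single t t (1 : A)) v = v := by
  rw [LinearMap.sum_apply]
  simp only [single_apply, one_mul]
  conv_rhs => rw [← Finsupp.sum_single v, Finsupp.sum_of_support_subset v (by exact_mod_cast hv)
    _ (fun _ _ => Finsupp.single_zero _)]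

lemma one_sub_sum_single_mem_vanishingOn (E : Finset S) :
    1 - ∑ t ∈ E, single t t (1 : A) ∈ vanishingOn A E := fun v hv => by
  rw [LinearMap.sub_apply, sum_single_apply_of_support_subset E hv, Module.End.one_apply,
    sub_self]

variable (A S N) in
def IsSmooth : Prop :=
  ∀ n : N, ∃ E : Finset S, ∀ f ∈ vanishingOn A E, f • n = 0

lemma sum_single_smul_of_vanishingOn {E : Finset S} {n : N}
    (hn : ∀ f ∈ vanishingOn A E, f • n = 0) : ∑ t ∈ E, single t t (1 : A) • n = n := by
  have := hn _ (one_sub_sum_single_mem_vanishingOn E)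
  rw [sub_smul (R := ColumnFiniteMatrix A S), one_smul, sub_eq_zero, Finset.sum_smul] at this
  exact this.symm

-- `v ⊗ m` under `A^{⊕S} ⊗_A M ≃ S →₀ M`.
def tmul (v : S →₀ A) : M →+ (S →₀ M) where
  toFun m := v.mapRange (· • m) (zero_smul A m)
  map_zero' := by ext; simp
  map_add' m m' := by ext; simp

@[simp] lemma tmul_apply (v : S →₀ A) (m : M) (s : S) : tmul v m s = v s • m := rfl

lemma single_tmul (t : S) (a : A) (m : M) :
    tmul (Finsupp.single t a) m = Finsupp.single t (a • m) :=
  Finsupp.mapRange_single (hf := zero_smul A m)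

lemma add_tmul (v w : S →₀ A) (m : M) : tmul (v + w) m = tmul v m + tmul w m := by
  ext; simp [add_smul]

@[simp] lemma zero_tmul (m : M) : tmul (0 : S →₀ A) m = 0 := by
  ext; simp

lemma op_smul_tmul (a : A) (v : S →₀ A) (m : M) : tmul (op a • v) m = tmul v (a • m) := by
  ext; simp [mul_smul]

def actionHom (f : ColumnFiniteMatrix A S) : (S →₀ M) →+ (S →₀ M) :=
  Finsupp.liftAddHom fun t => tmul (f (Finsupp.single t 1))

lemma actionHom_single (f : ColumnFiniteMatrix A S) (t : S) (m : M) :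
    actionHom f (Finsupp.single t m) = tmul (f (Finsupp.single t 1)) m :=
  Finsupp.liftAddHom_apply_single _ _ _

lemma actionHom_tmul (f : ColumnFiniteMatrix A S) (v : S →₀ A) (m : M) :
    actionHom f (tmul v m) = tmul (f v) m := by
  induction v using Finsupp.induction_linear with
  | zero => simp
  | add v w hv hw => rw [add_tmul, map_add, hv, hw, map_add, add_tmul]
  | single t a =>
    rw [single_tmul, actionHom_single, ← op_smul_single_one t a, map_smul f, op_smul_tmul]

lemma actionHom_one : actionHom (1 : ColumnFiniteMatrix A S) = AddMonoidHom.id (S →₀ M) :=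
  Finsupp.addHom_ext fun t m => by
    rw [actionHom_single, Module.End.one_apply, single_tmul, one_smul, AddMonoidHom.id_apply]

lemma actionHom_mul (f g : ColumnFiniteMatrix A S) :
    actionHom (f * g) = (actionHom f).comp (actionHom (M := M) g) :=
  Finsupp.addHom_ext fun t m => by
    rw [actionHom_single, Module.End.mul_apply, AddMonoidHom.comp_apply, actionHom_single,
      actionHom_tmul]

lemma actionHom_zero : actionHom (0 : ColumnFiniteMatrix A S) = (0 : (S →₀ M) →+ (S →₀ M)) :=
  Finsupp.addHom_ext fun t m => by
    rw [actionHom_single, LinearMap.zero_apply, zero_tmul, AddMonoidHom.zero_apply]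

lemma actionHom_add (f g : ColumnFiniteMatrix A S) :
    actionHom (f + g) = actionHom f + actionHom (M := M) g :=
  Finsupp.addHom_ext fun t m => by
    rw [actionHom_single, LinearMap.add_apply, add_tmul, AddMonoidHom.add_apply,
      actionHom_single, actionHom_single]

-- Only a local instance: for `M = A` it would not be defeq to evaluation `LinearMap.applyModule`.
abbrev finsuppModule : Module (ColumnFiniteMatrix A S) (S →₀ M) where
  smul f := actionHom f
  one_smul := DFunLike.congr_fun actionHom_one
  mul_smul f g := DFunLike.congr_fun (actionHom_mul f g)
  smul_zero f := map_zero (actionHom f)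
  smul_add f := map_add (actionHom f)
  add_smul f g := DFunLike.congr_fun (actionHom_add f g)
  zero_smul := DFunLike.congr_fun actionHom_zero

attribute [local instance] finsuppModule

lemma smul_finsupp_single (f : ColumnFiniteMatrix A S) (t : S) (m : M) :
    f • Finsupp.single t m = tmul (f (Finsupp.single t 1)) m :=
  actionHom_single f t m

lemma smul_finsupp_apply (f : ColumnFiniteMatrix A S) (x : S →₀ M) (s : S) :
    (f • x) s = x.sum fun t m => f (Finsupp.single t 1) s • m := by
  change actionHom f x s = _
  rw [actionHom, Finsupp.liftAddHom_apply, Finsupp.sum_apply]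
  rfl

lemma single_smul_finsupp (s t : S) (a : A) (x : S →₀ M) :
    single s t a • x = Finsupp.single s (a • x t) := by
  induction x using Finsupp.induction_linear with
  | zero => simp
  | add x y hx hy => rw [smul_add, hx, hy, Finsupp.add_apply, smul_add, Finsupp.single_add]
  | single u m =>
    rw [smul_finsupp_single, single_apply, single_tmul]
    by_cases h : t = u
    · subst h; simp
    · simp [Ne.symm h]

def finsuppSubmodule (P : Submodule A M) : Submodule (ColumnFiniteMatrix A S) (S →₀ M) where
  carrier := {x | ∀ s, x s ∈ P}
  add_mem' hx hy s := P.add_mem (hx s) (hy s)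
  zero_mem' _ := P.zero_mem
  smul_mem' f x hx s := by
    rw [smul_finsupp_apply]
    exact Submodule.finsuppSum_mem _ _ _ _ fun t _ => P.smul_mem _ (hx t)

lemma finite_finsupp [Nonempty S] [Module.Finite A M] :
    Module.Finite (ColumnFiniteMatrix A S) (S →₀ M) := by
  classical
  obtain ⟨s₀⟩ := ‹Nonempty S›
  obtain ⟨G, hG⟩ := Module.Finite.fg_top (R := A) (M := M)
  set P := Submodule.span (ColumnFiniteMatrix A S) (Finsupp.single s₀ '' (G : Set M))
  have h_single : ∀ m : M, Finsupp.single s₀ m ∈ P := by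
    intro m
    induction (hG ▸ Submodule.mem_top : m ∈ Submodule.span A (G : Set M))
      using Submodule.span_induction with
    | mem y hy => exact Submodule.subset_span (Set.mem_image_of_mem _ hy)
    | zero => simp
    | add y z _ _ hy hz => rw [Finsupp.single_add]; exact P.add_mem hy hz
    | smul a y _ hy =>
      rw [← Finsupp.single_eq_same (a := s₀) (b := y), ← single_smul_finsupp s₀ s₀ a]
      exact P.smul_mem _ hy
  refine ⟨⟨G.image (Finsupp.single s₀), ?_⟩⟩
  rw [Finset.coe_image, eq_top_iff]
  rintro x -
  rw [← Finsupp.sum_single x]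
  refine Submodule.finsuppSum_mem _ _ _ _ fun t _ => ?_
  have := P.smul_mem (single t s₀ (1 : A)) (h_single (x t))
  rwa [single_smul_finsupp, Finsupp.single_eq_same, one_smul] at this

lemma finite_of_finite_finsupp [Nonempty S] [Module.Finite (ColumnFiniteMatrix A S) (S →₀ M)] :
    Module.Finite A M := by
  obtain ⟨s₀⟩ := ‹Nonempty S›
  obtain ⟨G, hG⟩ := Module.Finite.fg_top (R := ColumnFiniteMatrix A S) (M := S →₀ M)
  set P := Submodule.span A (⋃ x ∈ G, Set.range x)
  have hG_le : finsuppSubmodule (S := S) P = ⊤ := by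
    rw [eq_top_iff, ← hG, Submodule.span_le]
    exact fun x hx s => Submodule.subset_span (Set.mem_biUnion hx (Set.mem_range_self s))
  have hP : P = ⊤ := by
    refine eq_top_iff.2 fun m _ => ?_
    simpa using (hG_le ▸ Submodule.mem_top : Finsupp.single s₀ m ∈ finsuppSubmodule P) s₀
  exact ⟨Submodule.fg_def.2 ⟨_, G.finite_toSet.biUnion fun x _ => x.finite_range, hP⟩⟩

-- `e N`, standing for `Hom_B(A^{⊕S}, N)` via evaluation at the basis vector `s₀`.
variable (A N) in
def corner (s₀ : S) : AddSubgroup N where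
  carrier := {n | single s₀ s₀ (1 : A) • n = n}
  add_mem' {n n'} hn hn' := by
    rw [Set.mem_ofPred_eq, smul_add, hn, hn']
  zero_mem' := smul_zero _
  neg_mem' {n} hn := by
    rw [Set.mem_ofPred_eq, smul_neg, hn]

variable (s₀ : S)

lemma single_smul_mem_corner (t : S) (a : A) (n : N) : single s₀ t a • n ∈ corner A N s₀ := by
  change single s₀ s₀ (1 : A) • single s₀ t a • n = single s₀ t a • n
  rw [← mul_smul, single_mul_single_same, one_mul]

instance : Module A (corner A N s₀) where
  smul a x := ⟨single s₀ s₀ a • (x : N), single_smul_mem_corner s₀ s₀ a (x : N)⟩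
  one_smul x := Subtype.ext (x.2 : single s₀ s₀ (1 : A) • (x : N) = x)
  mul_smul a b x := Subtype.ext <| by
    change single s₀ s₀ (a * b) • (x : N) = single s₀ s₀ a • single s₀ s₀ b • (x : N)
    rw [← mul_smul, single_mul_single_same]
  smul_zero a := Subtype.ext (smul_zero _)
  smul_add a x y := Subtype.ext (smul_add _ (x : N) y)
  add_smul a b x := Subtype.ext <| by
    change single s₀ s₀ (a + b) • (x : N) = single s₀ s₀ a • (x : N) + single s₀ s₀ b • (x : N)
    rw [single_add, add_smul]
  zero_smul x := Subtype.ext <| by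
    change single s₀ s₀ (0 : A) • (x : N) = 0
    rw [single_zero, zero_smul]

@[simp] lemma coe_smul_corner (a : A) (x : corner A N s₀) :
    ((a • x : corner A N s₀) : N) = single s₀ s₀ a • (x : N) := rfl

def cornerMap (ψ : N →ₗ[ColumnFiniteMatrix A S] N') : corner A N s₀ →ₗ[A] corner A N' s₀ where
  toFun x := ⟨ψ (x : N), by
    change single s₀ s₀ (1 : A) • ψ (x : N) = ψ x
    rw [← map_smul, x.2]⟩
  map_add' x y := Subtype.ext (map_add ψ (x : N) y)
  map_smul' a x := Subtype.ext (map_smul ψ _ (x : N))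

@[simp] lemma coe_cornerMap (ψ : N →ₗ[ColumnFiniteMatrix A S] N') (x : corner A N s₀) :
    (cornerMap s₀ ψ x : N') = ψ (x : N) := rfl

def counitAddHom : (S →₀ corner A N s₀) →+ N :=
  Finsupp.liftAddHom fun t =>
    (DistribSMul.toAddMonoidHom N (single t s₀ (1 : A))).comp (corner A N s₀).subtype

lemma counitAddHom_single (t : S) (m : corner A N s₀) :
    counitAddHom s₀ (Finsupp.single t m) = single t s₀ (1 : A) • (m : N) :=
  Finsupp.liftAddHom_apply_single _ _ _

lemma counitAddHom_tmul (w : S →₀ A) (m : corner A N s₀) :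
    counitAddHom s₀ (tmul w m) = (w.sum fun s a => single s s₀ a) • (m : N) := by
  induction w using Finsupp.induction_linear with
  | zero => simp
  | add v w hv hw =>
    rw [add_tmul, map_add, hv, hw, ← add_smul,
      Finsupp.sum_add_index' (fun _ => single_zero _ _) (fun _ _ _ => single_add _ _ _ _)]
  | single t a =>
    rw [single_tmul, counitAddHom_single, coe_smul_corner, ← mul_smul, single_mul_single_same,
      one_mul, Finsupp.sum_single_index (h := fun s a => single s s₀ a) (single_zero t s₀)]

def counit : (S →₀ corner A N s₀) →ₗ[ColumnFiniteMatrix A S] N where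
  __ := counitAddHom s₀
  map_smul' f x := by
    refine DFunLike.congr_fun (Finsupp.addHom_ext (f := (counitAddHom s₀).comp (actionHom f))
      (g := (DistribSMul.toAddMonoidHom N f).comp (counitAddHom s₀)) fun t m => ?_) x
    rw [AddMonoidHom.comp_apply, actionHom_single, counitAddHom_tmul, AddMonoidHom.comp_apply,
      counitAddHom_single, DistribSMul.toAddMonoidHom_apply, ← mul_smul, mul_single_one]

lemma counit_single (t : S) (m : corner A N s₀) :
    counit s₀ (Finsupp.single t m) = single t s₀ (1 : A) • (m : N) :=
  counitAddHom_single s₀ t m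

lemma single_smul_counit (t : S) (x : S →₀ corner A N s₀) :
    single s₀ t (1 : A) • counit s₀ x = x t := by
  induction x using Finsupp.induction_linear with
  | zero => simp
  | add x y hx hy => rw [map_add, smul_add, hx, hy, Finsupp.add_apply, AddSubgroup.coe_add]
  | single u m =>
    rw [counit_single, ← mul_smul]
    by_cases h : t = u
    · subst h
      rw [single_mul_single_same, one_mul, Finsupp.single_eq_same]
      exact m.2
    · rw [single_mul_single_of_ne h, zero_smul, Finsupp.single_eq_of_ne h,
        ZeroMemClass.coe_zero]

lemma counit_injective : Function.Injective (counit (A := A) (N := N) s₀) := fun x y h =>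
  Finsupp.ext fun t => Subtype.ext <| by rw [← single_smul_counit, h, single_smul_counit]

lemma counit_surjective (hN : IsSmooth A S N) :
    Function.Surjective (counit (A := A) (N := N) s₀) := by
  intro n
  obtain ⟨E, hE⟩ := hN n
  refine ⟨∑ t ∈ E, Finsupp.single t ⟨single s₀ t (1 : A) • n, single_smul_mem_corner s₀ t 1 n⟩, ?_⟩
  conv_rhs => rw [← sum_single_smul_of_vanishingOn hE]
  rw [map_sum]
  refine Finset.sum_congr rfl fun t _ => ?_
  rw [counit_single, ← mul_smul, single_mul_single_same, one_mul]

def counitEquiv (hN : IsSmooth A S N) : (S →₀ corner A N s₀) ≃ₗ[ColumnFiniteMatrix A S] N :=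
  LinearEquiv.ofBijective (counit s₀) ⟨counit_injective s₀, counit_surjective s₀ hN⟩

lemma finite_corner [Module.Finite (ColumnFiniteMatrix A S) N] (hN : IsSmooth A S N) :
    Module.Finite A (corner A N s₀) :=
  have : Nonempty S := ⟨s₀⟩
  have := Module.Finite.equiv (counitEquiv s₀ hN).symm
  finite_of_finite_finsupp (S := S)

lemma single_smul_single_same (a : A) (m : M) :
    single s₀ s₀ a • Finsupp.single s₀ m = Finsupp.single s₀ (a • m) := by
  rw [single_smul_finsupp, Finsupp.single_eq_same]

def unitEquiv : M ≃ₗ[A] corner A (S →₀ M) s₀ where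
  toFun m := ⟨Finsupp.single s₀ m, by
    change single s₀ s₀ (1 : A) • _ = _
    rw [single_smul_single_same, one_smul]⟩
  invFun x := (x : S →₀ M) s₀
  left_inv m := Finsupp.single_eq_same
  right_inv x := Subtype.ext <| by
    change Finsupp.single s₀ ((x : S →₀ M) s₀) = x
    conv_rhs => rw [← (x.2 : single s₀ s₀ (1 : A) • (x : S →₀ M) = x), single_smul_finsupp,
      one_smul]
  map_add' m m' := Subtype.ext (Finsupp.single_add s₀ m m')
  map_smul' a m := Subtype.ext (single_smul_single_same s₀ a m).symm

lemma isSmooth_finsupp : IsSmooth A S (S →₀ M) := by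
  refine fun x => ⟨x.support, fun f hf => Finsupp.ext fun s => ?_⟩
  rw [smul_finsupp_apply, Finsupp.zero_apply]
  refine Finset.sum_eq_zero fun t ht => ?_
  have h_supp : ((Finsupp.single t (1 : A)).support : Set S) ⊆ x.support := fun u hu =>
    (Finset.mem_singleton.1 (Finsupp.support_single_subset hu)) ▸ ht
  change f (Finsupp.single t 1) s • x t = 0
  rw [hf _ h_supp, Finsupp.zero_apply, zero_smul]

def finsuppMap (φ : M →ₗ[A] M') : (S →₀ M) →ₗ[ColumnFiniteMatrix A S] (S →₀ M') where
  toFun x := x.mapRange φ φ.map_zero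
  map_add' := Finsupp.mapRange_add φ.map_add
  map_smul' f x := by
    induction x using Finsupp.induction_linear with
    | zero => simp
    | add x y hx hy =>
      rw [smul_add, Finsupp.mapRange_add φ.map_add, hx, hy, Finsupp.mapRange_add φ.map_add,
        smul_add]
    | single t m =>
      rw [smul_finsupp_single, Finsupp.mapRange_single, RingHom.id_apply, smul_finsupp_single]
      ext s
      simp

lemma finsuppMap_single (φ : M →ₗ[A] M') (t : S) (m : M) :
    finsuppMap φ (Finsupp.single t m) = Finsupp.single t (φ m) :=
  Finsupp.mapRange_single (hf := φ.map_zero)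

lemma unitEquiv_naturality (φ : M →ₗ[A] M') (m : M) :
    unitEquiv s₀ (φ m) = cornerMap s₀ (finsuppMap φ) (unitEquiv s₀ m) :=
  Subtype.ext (finsuppMap_single φ s₀ m).symm

lemma counit_naturality (ψ : N →ₗ[ColumnFiniteMatrix A S] N') (x : S →₀ corner A N s₀) :
    counit s₀ (finsuppMap (cornerMap s₀ ψ) x) = ψ (counit (A := A) s₀ x) := by
  induction x using Finsupp.induction_linear with
  | zero => simp
  | add x y hx hy => rw [map_add, map_add, hx, hy, map_add, map_add]
  | single t m =>
    rw [finsuppMap_single, counit_single, counit_single, map_smul, coe_cornerMap]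

open CategoryTheory

def finsuppFunctor : ModuleCat.{v} A ⥤ ModuleCat.{v} (ColumnFiniteMatrix A S) where
  obj M := ModuleCat.of _ (S →₀ M)
  map φ := ModuleCat.ofHom (finsuppMap φ.hom)
  map_id _ := ModuleCat.hom_ext (LinearMap.ext fun _ => Finsupp.ext fun _ => rfl)
  map_comp _ _ := ModuleCat.hom_ext (LinearMap.ext fun _ => Finsupp.ext fun _ => rfl)

def cornerFunctor : ModuleCat.{v} (ColumnFiniteMatrix A S) ⥤ ModuleCat.{v} A where
  obj N := ModuleCat.of A (corner A N s₀)
  map ψ := ModuleCat.ofHom (cornerMap s₀ ψ.hom)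

def equivalence :
    ObjectProperty.FullSubcategory (fun M : ModuleCat.{v} A => Module.Finite A M) ≌
      ObjectProperty.FullSubcategory (fun N : ModuleCat.{v} (ColumnFiniteMatrix A S) =>
        Module.Finite (ColumnFiniteMatrix A S) N ∧ IsSmooth A S N) :=
  CategoryTheory.Equivalence.mk
    (ObjectProperty.lift _ (ObjectProperty.ι _ ⋙ finsuppFunctor) fun M =>
      have : Module.Finite A M.obj := M.property
      have : Nonempty S := ⟨s₀⟩
      ⟨finite_finsupp (M := M.obj), isSmooth_finsupp⟩)
    (ObjectProperty.lift _ (ObjectProperty.ι _ ⋙ cornerFunctor s₀) fun N =>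
      have : Module.Finite (ColumnFiniteMatrix A S) N.obj := N.property.1
      finite_corner (N := N.obj) s₀ N.property.2)
    (NatIso.ofComponents (fun M => ObjectProperty.isoMk _ (unitEquiv s₀).toModuleIso)
      fun φ => ObjectProperty.hom_ext _ (ModuleCat.hom_ext
        (LinearMap.ext (unitEquiv_naturality s₀ φ.hom.hom))))
    (NatIso.ofComponents
      (fun N => ObjectProperty.isoMk _ (counitEquiv (N := N.obj) s₀ N.property.2).toModuleIso)
      fun ψ => ObjectProperty.hom_ext _ (ModuleCat.hom_ext
        (LinearMap.ext fun x => by exact counit_naturality s₀ ψ.hom.hom x)))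

end

end ColumnFiniteMatrix

open CategoryTheory in
theorem stmt4_general {A S : Type} [Ring A] [Infinite S] :
    Nonempty
      ((ObjectProperty.FullSubcategory fun M : ModuleCat.{0} A => Module.Finite A M) ≌
        (ObjectProperty.FullSubcategory fun N : ModuleCat.{0} (Module.End Aᵐᵒᵖ (S →₀ A)) =>
          Module.Finite (Module.End Aᵐᵒᵖ (S →₀ A)) N ∧
            ∀ n : N, ∃ E : Finset S, ∀ f : Module.End Aᵐᵒᵖ (S →₀ A),
              (∀ v : S →₀ A, (v.support : Set S) ⊆ (E : Set S) → f v = 0) →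
                f • n = 0)) :=
  ⟨ColumnFiniteMatrix.equivalence (Classical.arbitrary S)⟩

open CategoryTheory in
/-- Let `A` be a unital ring, `S` countably infinite, and `B = M_S(A)` the ring
of column-finite matrices, i.e. `End_A(A^{⊕S})` with the finite topology (whose
basic open ideals are `I_E = {f : f|_{A^{⊕E}} = 0}` for finite `E ⊆ S`).  The
category of finitely generated left `A`-modules is equivalent to the category of
smooth finitely generated left `B`-modules, where a `B`-module is smooth if the
annihilator of each element contains some `I_E` (equivalently, is open). -/
theorem stmt4 {A S : Type} [Ring A] [Infinite S] [Countable S] :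
    Nonempty
      ((ObjectProperty.FullSubcategory fun M : ModuleCat.{0} A => Module.Finite A M) ≌
        (ObjectProperty.FullSubcategory fun N : ModuleCat.{0} (Module.End Aᵐᵒᵖ (S →₀ A)) =>
          Module.Finite (Module.End Aᵐᵒᵖ (S →₀ A)) N ∧
            ∀ n : N, ∃ E : Finset S, ∀ f : Module.End Aᵐᵒᵖ (S →₀ A),
              (∀ v : S →₀ A, (v.support : Set S) ⊆ (E : Set S) → f v = 0) →
                f • n = 0)) :=
  stmt4_general
end

section
/- Let k be a field. In the category ^λO, the module P(μ) = H'/H'[μ] is projective: the functor M ↦ M_μ = {m ∈ M : [μ]m = 0} ≅ Hom_{H'}(P(μ), M) is exact on ^λO, and a morphism f : M → N in ^λO satisfies f(M_μ) = f(M)_μ for every μ ∈ Ŵλ. -/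
/-!
If `m` is killed by `∏_{ν ∈ E} [ν]` and `f m` is killed by `[μ]`, comaximality gives
`a + b = 1` with `a ∈ [μ]` and `b ∈ [ν]` for all `ν ∈ E \ {μ}`. Then `b • m` is killed by `[μ]`
and `f (b • m) = f m - a • f m = f m`, so every element of `f(M)_μ` already comes from `M_μ`.
-/

theorem Ideal.exists_add_eq_one_of_forall_sup_eq_top {R κ : Type*} [CommRing R]
    (I : κ → Ideal R) (i : κ) (s : Finset κ) (hco : ∀ j ∈ s, j ≠ i → I i ⊔ I j = ⊤) :
    ∃ a ∈ I i, ∃ b, (∀ j ∈ s, j ≠ i → b ∈ I j) ∧ a + b = 1 := by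
  classical
  have htop : I i ⊔ ∏ j ∈ s.erase i, I j = ⊤ :=
    Ideal.sup_prod_eq_top fun j hj =>
      hco j (Finset.mem_of_mem_erase hj) (Finset.ne_of_mem_erase hj)
  obtain ⟨a, ha, b, hb, hab⟩ := Submodule.mem_sup.mp (htop ▸ Submodule.mem_top : (1 : R) ∈ _)
  refine ⟨a, ha, b, fun j hj hji => ?_, hab⟩
  exact Ideal.prod_le_inf.trans (Finset.inf_le (Finset.mem_erase.mpr ⟨hji, hj⟩)) hb

section KilledBy

variable {S H M N κ : Type*} [CommRing S] [Ring H]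
  [AddCommGroup M] [Module H M] [AddCommGroup N] [Module H N] (ι : S →+* H)

/-- `M_μ` when `I = [μ]`. -/
def killedBy (I : Ideal S) : Set M := {m | ∀ p ∈ I, ι p • m = 0}

theorem map_mem_killedBy {I : Ideal S} (f : M →ₗ[H] N) {m : M} (hm : m ∈ killedBy ι I) :
    f m ∈ killedBy ι I := fun p hp => by
  rw [← f.map_smul, hm p hp, map_zero]

theorem exists_mem_killedBy_map_eq (I : κ → Ideal S) (i : κ) (s : Finset κ)
    (hco : ∀ j ∈ s, j ≠ i → I i ⊔ I j = ⊤) {m : M}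
    (hm : ∀ p : S, (∀ j ∈ s, p ∈ I j) → ι p • m = 0) (f : M →ₗ[H] N)
    (hfm : f m ∈ killedBy ι (I i)) : ∃ m' ∈ killedBy ι (I i), f m' = f m := by
  obtain ⟨a, ha, b, hb, hab⟩ := Ideal.exists_add_eq_one_of_forall_sup_eq_top I i s hco
  refine ⟨ι b • m, fun p hp => ?_, ?_⟩
  · rw [← mul_smul, ← map_mul]
    refine hm _ fun j hj => ?_
    by_cases hji : j = i
    · subst hji
      exact Ideal.mul_mem_right _ _ hp
    · exact Ideal.mul_mem_left _ _ (hb j hj hji)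
  · calc f (ι b • m) = ι b • f m := f.map_smul _ _
      _ = ι a • f m + ι b • f m := by rw [hfm a ha, zero_add]
      _ = f m := by rw [← add_smul, ← map_add, hab, map_one, one_smul]

theorem image_killedBy_eq (I : κ → Ideal S) (i : κ) (hco : ∀ j, j ≠ i → I i ⊔ I j = ⊤)
    (hloc : ∀ m : M, ∃ s : Finset κ, ∀ p : S, (∀ j ∈ s, p ∈ I j) → ι p • m = 0)
    (f : M →ₗ[H] N) : f '' killedBy ι (I i) = Set.range f ∩ killedBy ι (I i) := by
  refine Set.Subset.antisymm ?_ ?_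
  · rintro _ ⟨m, hm, rfl⟩
    exact ⟨⟨m, rfl⟩, map_mem_killedBy ι f hm⟩
  · rintro _ ⟨⟨m, rfl⟩, hfm⟩
    obtain ⟨s, hs⟩ := hloc m
    exact exists_mem_killedBy_map_eq ι I i s (fun j _ => hco j) hs f hfm

end KilledBy

theorem stmt13_general {k S H M N : Type*} [Field k] [CommRing S]
    [Algebra k S] [Ring H] [Algebra k H]
    [AddCommGroup M] [Module H M] [AddCommGroup N] [Module H N]
    (ι : S →ₐ[k] H) (Λ : Set (S →ₐ[k] k)) (Iof : (S →ₐ[k] k) → Ideal S)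
    (hco : ∀ μ ∈ Λ, ∀ ν ∈ Λ, μ ≠ ν → Iof μ ⊔ Iof ν = ⊤)
    (hlocM : ∀ m : M, ∃ E : Finset ↥Λ,
      ∀ p : S, (∀ μ ∈ E, p ∈ Iof (μ : ↥Λ).1) → ι p • m = 0)
    (μ : ↥Λ) (f : M →ₗ[H] N) :
    (⇑f '' {m : M | ∀ p ∈ Iof μ.1, ι p • m = 0}
        = Set.range ⇑f ∩ {n : N | ∀ p ∈ Iof μ.1, ι p • n = 0}) ∧
    (Function.Surjective ⇑f →
      ∀ n : N, (∀ p ∈ Iof μ.1, ι p • n = 0) →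
        ∃ m : M, (∀ p ∈ Iof μ.1, ι p • m = 0) ∧ f m = n) := by
  have hcoΛ (ν : ↥Λ) (hν : ν ≠ μ) : Iof μ.1 ⊔ Iof ν.1 = ⊤ :=
    hco _ μ.2 _ ν.2 fun h => hν (Subtype.ext h.symm)
  have himage := image_killedBy_eq ι.toRingHom (fun ν : ↥Λ => Iof ν.1) μ hcoΛ hlocM f
  refine ⟨himage, fun hsurj n hn => ?_⟩
  obtain ⟨m, hm, rfl⟩ := himage.symm.subset ⟨hsurj n, hn⟩
  exact ⟨m, hm, rfl⟩

/-- Projectivity of `P(μ) = H'/H'[μ]` in `^λO`.  With `H` the degenerate double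
affine Hecke algebra containing the polynomial algebra `S` via `ι`, `Λ = Ŵλ` the
orbit of points with pairwise comaximal ideals `[μ] = Iof μ`, and `M, N` modules
in `^λO` (every element killed by some finite intersection `[E]`), every
`H`-linear map `f : M → N` satisfies `f(M_μ) = f(M)_μ` for `μ ∈ Λ`
(where `M_μ = {m : [μ] m = 0} ≅ Hom_{H}(P(μ), M)`), and consequently the functor
`M ↦ M_μ` represented by `P(μ)` is exact on `^λO`: if `f` is surjective then
every element of `N_μ` lifts to `M_μ`. -/
theorem stmt13 {k S H M N : Type*} [Field k] [CharZero k] [CommRing S]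
    [Algebra k S] [Ring H] [Algebra k H]
    [AddCommGroup M] [Module H M] [AddCommGroup N] [Module H N]
    (ι : S →ₐ[k] H) (Λ : Set (S →ₐ[k] k)) (Iof : (S →ₐ[k] k) → Ideal S)
    (hco : ∀ μ ∈ Λ, ∀ ν ∈ Λ, μ ≠ ν → Iof μ ⊔ Iof ν = ⊤)
    (hlocM : ∀ m : M, ∃ E : Finset ↥Λ,
      ∀ p : S, (∀ μ ∈ E, p ∈ Iof (μ : ↥Λ).1) → ι p • m = 0)
    (hlocN : ∀ n : N, ∃ E : Finset ↥Λ,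
      ∀ p : S, (∀ μ ∈ E, p ∈ Iof (μ : ↥Λ).1) → ι p • n = 0)
    (μ : ↥Λ) (f : M →ₗ[H] N) :
    (⇑f '' {m : M | ∀ p ∈ Iof μ.1, ι p • m = 0}
        = Set.range ⇑f ∩ {n : N | ∀ p ∈ Iof μ.1, ι p • n = 0}) ∧
    (Function.Surjective ⇑f →
      ∀ n : N, (∀ p ∈ Iof μ.1, ι p • n = 0) →
        ∃ m : M, (∀ p ∈ Iof μ.1, ι p • m = 0) ∧ f m = n) :=
  stmt13_general ι Λ Iof hco hlocM μ f
end
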